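/- Let p be a function analytic on the open unit disk 𝔻 with p(0) = 1. If |z·p'(z) + 3·p(z) − 2·p(z)² − 1| < 1/4 for all z ∈ 𝔻, then Re p(z) > 1/2 for all z ∈ 𝔻. -/

import Mathlib

/-!
Put `ω = (p - 1) / p`, so that `‖ω‖ < 1` exactly where `Re p > 1/2`, and `ω 0 = 0`. If `Re p ≤ 1/2`
somewhere, let `z₀` be such a point of least modulus. Then `‖ω‖ ≤ 1 = ‖ω z₀‖` on the closed disk of
radius `‖z₀‖`, and Jack's lemma gives `z₀ ω'(z₀) = k ω(z₀)` with `k ≥ 1`, i.e.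
`z₀ p'(z₀) = k (p - 1) p` at `z₀`. There `z p' + 3p - 2p² - 1 = (p - 1) ((k - 2) p + 1)`, whose
modulus is at least `1/4` as soon as `Re p = 1/2`.
-/

open Complex Metric
open Filter Set Topology ComplexConjugate

theorem HasDerivAt.nonneg_of_eventually_le_left {f : ℝ → ℝ} {f' a : ℝ}
    (hf : HasDerivAt f f' a) (hle : ∀ᶠ t in 𝓝[<] a, f t ≤ f a) : 0 ≤ f' := by
  have hcone : (a - 1) - a ∈ posTangentConeAt (Iio a) a :=
    sub_mem_posTangentConeAt_of_openSegment_subset (by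
      rw [openSegment_symm, openSegment_eq_Ioo (by linarith)]; exact Ioo_subset_Iio_self)
  simpa using IsLocalMaxOn.hasFDerivWithinAt_nonpos hle hf.hasFDerivAt.hasFDerivWithinAt hcone

theorem HasDerivAt.sq_norm_comp_of_eq {ω : ℂ → ℂ} {γ : ℝ → ℂ} {ω' γ' z : ℂ} {t : ℝ}
    (hω : HasDerivAt ω ω' z) (hγ : HasDerivAt γ γ' t) (hz : γ t = z) :
    HasDerivAt (fun s ↦ ‖ω (γ s)‖ ^ 2) (2 * (γ' * ω' * conj (ω z)).re) t := by
  subst hz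
  simpa [Complex.inner, mul_comm γ'] using (hω.comp t hγ).norm_sq

section Jack

variable {ω : ℂ → ℂ} {ω' z₀ : ℂ}

theorem sq_norm_le_re_mul_conj_of_mapsTo_ball (hz₀ : z₀ ≠ 0)
    (hd : DifferentiableOn ℂ ω (ball 0 ‖z₀‖)) (hω' : HasDerivAt ω ω' z₀) (h0 : ω 0 = 0)
    (hmaps : MapsTo ω (ball 0 ‖z₀‖) (closedBall 0 ‖ω z₀‖)) :
    ‖ω z₀‖ ^ 2 ≤ (z₀ * ω' * conj (ω z₀)).re := by
  set M := ‖ω z₀‖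
  have hγ : HasDerivAt (fun t : ℝ ↦ (t : ℂ) * z₀) z₀ 1 := by
    simpa using (hasDerivAt_id (1 : ℝ)).ofReal_comp.mul_const z₀
  have hf : HasDerivAt (fun t : ℝ ↦ ‖ω (t * z₀)‖ ^ 2 - M ^ 2 * t ^ 2)
      (2 * (z₀ * ω' * conj (ω z₀)).re - 2 * M ^ 2) 1 := by
    refine ((hω'.sq_norm_comp_of_eq hγ (by simp)).sub
      ((hasDerivAt_pow 2 (1 : ℝ)).const_mul (M ^ 2))).congr_deriv ?_
    ring
  have hschwarz : ∀ t ∈ Ioo (0 : ℝ) 1, ‖ω (t * z₀)‖ ≤ M * t := by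
    intro t ht
    have hnorm : ‖(t : ℂ) * z₀‖ = t * ‖z₀‖ := by
      rw [norm_mul, Complex.norm_real, Real.norm_of_nonneg ht.1.le]
    have hmem : (t : ℂ) * z₀ ∈ ball 0 ‖z₀‖ := by
      rw [mem_ball_zero_iff, hnorm]
      nlinarith [ht.2, norm_pos_iff.2 hz₀]
    have := Complex.dist_le_div_mul_dist_of_mapsTo_ball hd (by rwa [h0]) hmem
    rw [h0, dist_zero_right, dist_zero_right, hnorm] at this
    rwa [div_mul_eq_mul_div, mul_div_assoc, mul_div_cancel_right₀ _ (norm_ne_zero_iff.2 hz₀)]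
      at this
  have hle : ∀ᶠ t : ℝ in 𝓝[<] 1, ‖ω (t * z₀)‖ ^ 2 - M ^ 2 * t ^ 2 ≤
      ‖ω ((1 : ℝ) * z₀)‖ ^ 2 - M ^ 2 * 1 ^ 2 := by
    filter_upwards [Ioo_mem_nhdsLT zero_lt_one] with t ht
    have := hschwarz t ht
    simp only [ofReal_one, one_mul, one_pow, mul_one]
    nlinarith [norm_nonneg (ω (t * z₀))]
  linarith [hf.nonneg_of_eventually_le_left hle]

theorem im_mul_conj_eq_zero_of_norm_le_on_sphere (hω' : HasDerivAt ω ω' z₀)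
    (hmax : ∀ z, ‖z‖ = ‖z₀‖ → ‖ω z‖ ≤ ‖ω z₀‖) :
    (z₀ * ω' * conj (ω z₀)).im = 0 := by
  have hγ : HasDerivAt (fun θ : ℝ ↦ z₀ * exp (θ * I)) (z₀ * I) 0 := by
    simpa using (((hasDerivAt_id (0 : ℝ)).ofReal_comp.mul_const I).cexp).const_mul z₀
  have hmax' : IsLocalMax (fun θ : ℝ ↦ ‖ω (z₀ * exp (θ * I))‖ ^ 2) 0 :=
    Eventually.of_forall fun θ ↦ by
      simpa using pow_le_pow_left₀ (norm_nonneg _) (hmax _ (by simp [norm_exp_ofReal_mul_I])) 2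
  have := hmax'.hasDerivAt_eq_zero (hω'.sq_norm_comp_of_eq hγ (by simp))
  have h : (z₀ * I * ω' * conj (ω z₀)).re = -(z₀ * ω' * conj (ω z₀)).im := by
    rw [mul_right_comm z₀, mul_assoc (z₀ * ω'), mul_comm I, ← mul_assoc, mul_I_re]
  linarith

theorem jack_lemma (hd : DifferentiableOn ℂ ω (ball 0 ‖z₀‖)) (hω' : HasDerivAt ω ω' z₀)
    (h0 : ω 0 = 0) (hmax : ∀ z, ‖z‖ ≤ ‖z₀‖ → ‖ω z‖ ≤ ‖ω z₀‖) (hne : ω z₀ ≠ 0) :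
    ∃ k : ℝ, 1 ≤ k ∧ z₀ * ω' = k * ω z₀ := by
  have hz₀ : z₀ ≠ 0 := by rintro rfl; exact hne h0
  set c := z₀ * ω' * conj (ω z₀)
  have hre : ‖ω z₀‖ ^ 2 ≤ c.re := sq_norm_le_re_mul_conj_of_mapsTo_ball hz₀ hd hω' h0
    fun z hz ↦ mem_closedBall_zero_iff.2 (hmax z (mem_ball_zero_iff.1 hz).le)
  have him : c.im = 0 := im_mul_conj_eq_zero_of_norm_le_on_sphere hω' fun z hz ↦ hmax z hz.le
  have hM : 0 < ‖ω z₀‖ ^ 2 := by positivity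
  refine ⟨c.re / ‖ω z₀‖ ^ 2, (one_le_div hM).2 hre, ?_⟩
  have hc : (c.re : ℂ) = c := Complex.ext rfl (by simp [him])
  have hcω : c * ω z₀ = z₀ * ω' * (‖ω z₀‖ ^ 2 : ℝ) := by
    simp only [c, mul_assoc, ofReal_pow, conj_mul']
  rw [ofReal_div, hc, div_mul_eq_mul_div, eq_div_iff (ofReal_ne_zero.2 hM.ne'), hcω]

end Jack

theorem exists_minimal_norm_le {E : Type*} [NormedAddCommGroup E] [ProperSpace E] {f : E → ℝ}
    {R a : ℝ} {w : E} (hf : ContinuousOn f (ball 0 R)) (hw : w ∈ ball 0 R) (hfw : f w ≤ a) :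
    ∃ z₀ ∈ ball 0 R, f z₀ ≤ a ∧ ∀ z ∈ ball 0 ‖z₀‖, a < f z := by
  have hwR : closedBall (0 : E) ‖w‖ ⊆ ball 0 R := closedBall_subset_ball (mem_ball_zero_iff.1 hw)
  have hK : IsCompact (closedBall 0 ‖w‖ ∩ f ⁻¹' Iic a) :=
    (isCompact_closedBall 0 ‖w‖).of_isClosed_subset
      ((hf.mono hwR).preimage_isClosed_of_isClosed isClosed_closedBall isClosed_Iic)
      inter_subset_left
  obtain ⟨z₀, ⟨hz₀w, hz₀a⟩, hmin⟩ :=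
    hK.exists_isMinOn ⟨w, by simp, hfw⟩ continuous_norm.continuousOn
  refine ⟨z₀, hwR hz₀w, hz₀a, fun z hz ↦ lt_of_not_ge fun hza ↦ ?_⟩
  have hz : ‖z‖ < ‖z₀‖ := mem_ball_zero_iff.1 hz
  exact hz.not_ge (hmin ⟨mem_closedBall_zero_iff.2 (hz.le.trans (mem_closedBall_zero_iff.1 hz₀w)),
    hza⟩)

theorem ContinuousOn.le_on_closedBall_of_lt_on_ball {E : Type*} [NormedAddCommGroup E]
    [NormedSpace ℝ E] {f : E → ℝ} {c : E} {r a : ℝ} (hr : r ≠ 0)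
    (hf : ContinuousOn f (closedBall c r)) (h : ∀ z ∈ ball c r, a < f z) :
    ∀ z ∈ closedBall c r, a ≤ f z := by
  rw [← closure_ball c hr] at hf ⊢
  exact fun z hz ↦ isClosed_Ici.closure_subset
    (MapsTo.closure_of_continuousOn (t := Ici a) (fun z hz ↦ (h z hz).le) hf hz)

theorem HasDerivAt.sub_one_div_self {𝕜 : Type*} [NontriviallyNormedField 𝕜] {f : 𝕜 → 𝕜}
    {f' z : 𝕜} (hf : HasDerivAt f f' z) (hz : f z ≠ 0) :
    HasDerivAt (fun x ↦ (f x - 1) / f x) (f' / f z ^ 2) z :=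
  ((hf.sub_const 1).div hf hz).congr_deriv (by field_simp; ring)

theorem sq_norm_sub_one (u : ℂ) : ‖u - 1‖ ^ 2 = ‖u‖ ^ 2 - 2 * u.re + 1 := by
  simp only [Complex.sq_norm, normSq_apply, sub_re, sub_im, one_re, one_im]
  ring

theorem norm_sub_one_div_self_le_one {u : ℂ} (hu : 1 / 2 ≤ u.re) : ‖(u - 1) / u‖ ≤ 1 := by
  have hu0 : 0 < ‖u‖ := norm_pos_iff.2 (ne_zero_of_re_pos (one_half_pos.trans_le hu))
  rw [norm_div, div_le_one hu0]
  nlinarith [sq_norm_sub_one u, norm_nonneg (u - 1)]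

theorem norm_sub_one_div_self_eq_one {u : ℂ} (hu : u.re = 1 / 2) : ‖(u - 1) / u‖ = 1 := by
  have hu0 : 0 < ‖u‖ := norm_pos_iff.2 (ne_zero_of_re_pos (by linarith))
  rw [norm_div, div_eq_one_iff_eq hu0.ne']
  exact (sq_eq_sq₀ (norm_nonneg _) hu0.le).1 (by rw [sq_norm_sub_one, hu]; ring)

theorem quarter_le_norm_mul_of_re_eq_half {u : ℂ} {k : ℝ} (hu : u.re = 1 / 2) (hk : 1 ≤ k) :
    1 / 4 ≤ ‖(u - 1) * ((k - 2) * u + 1)‖ := by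
  have hsq : ‖(u - 1) * ((k - 2) * u + 1)‖ ^ 2 =
      (1 / 4 + u.im ^ 2) * (k ^ 2 / 4 + (k - 2) ^ 2 * u.im ^ 2) := by
    simp only [Complex.sq_norm, normSq_apply, sub_re, sub_im, add_re, add_im, mul_re, mul_im,
      ofReal_re, ofReal_im, one_re, one_im, re_ofNat, im_ofNat, hu]
    ring
  nlinarith [norm_nonneg ((u - 1) * ((k - 2) * u + 1)), sq_nonneg u.im,
    mul_nonneg (sq_nonneg u.im) (sq_nonneg (k - 2))]

theorem stmt_14 (p : ℂ → ℂ)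
    (hp : AnalyticOnNhd ℂ p (ball (0 : ℂ) 1))
    (hp0 : p 0 = 1)
    (hineq : ∀ z ∈ ball (0 : ℂ) 1,
      ‖z * deriv p z + 3 * p z - 2 * (p z) ^ 2 - 1‖ < 1 / 4) :
    ∀ z ∈ ball (0 : ℂ) 1, 1 / 2 < (p z).re := by
  intro w hw
  by_contra! hw_le
  have hre_cont : ContinuousOn (fun z ↦ (p z).re) (ball 0 1) :=
    continuous_re.comp_continuousOn hp.continuousOn
  obtain ⟨z₀, hz₀, hz₀_le, hinside⟩ := exists_minimal_norm_le hre_cont hw hw_le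
  have hz₀_ne : z₀ ≠ 0 := by rintro rfl; norm_num [hp0] at hz₀_le
  have hsub : closedBall 0 ‖z₀‖ ⊆ ball (0 : ℂ) 1 := closedBall_subset_ball (mem_ball_zero_iff.1 hz₀)
  have hclosed : ∀ z ∈ closedBall 0 ‖z₀‖, 1 / 2 ≤ (p z).re :=
    (hre_cont.mono hsub).le_on_closedBall_of_lt_on_ball (norm_ne_zero_iff.2 hz₀_ne) hinside
  have hu : (p z₀).re = 1 / 2 := le_antisymm hz₀_le (hclosed z₀ (mem_closedBall_zero_iff.2 le_rfl))
  have hderiv : ∀ z ∈ closedBall 0 ‖z₀‖,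
      HasDerivAt (fun z ↦ (p z - 1) / p z) (deriv p z / p z ^ 2) z := fun z hz ↦
    (hp z (hsub hz)).differentiableAt.hasDerivAt.sub_one_div_self
      (ne_zero_of_re_pos (one_half_pos.trans_le (hclosed z hz)))
  obtain ⟨k, hk, hjack⟩ := jack_lemma
    (fun z hz ↦ (hderiv z (ball_subset_closedBall hz)).differentiableAt.differentiableWithinAt)
    (hderiv z₀ (mem_closedBall_zero_iff.2 le_rfl)) (by simp [hp0])
    (fun z hz ↦ (norm_sub_one_div_self_le_one (hclosed z (mem_closedBall_zero_iff.2 hz))).trans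
      (norm_sub_one_div_self_eq_one hu).ge)
    (norm_ne_zero_iff.1 (by rw [norm_sub_one_div_self_eq_one hu]; exact one_ne_zero))
  have hfactor : z₀ * deriv p z₀ + 3 * p z₀ - 2 * p z₀ ^ 2 - 1 =
      (p z₀ - 1) * ((k - 2) * p z₀ + 1) := by
    have hu0 : p z₀ ≠ 0 := ne_zero_of_re_pos (by linarith)
    field_simp at hjack
    linear_combination hjack
  exact (hineq z₀ hz₀).not_ge (hfactor ▸ quarter_le_norm_mul_of_re_eq_half hu hk)
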